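/- arXiv:0904.2061 — 3 statements merged into one kernel-verified Lean document; each statement's English description precedes it below -/
import Mathlib

section
/- Every instance of selfish bin covering admits a rational partition π with p(π) = OPT. -/
/-!
Choose a partition of maximum welfare which, among those, lexicographically minimizes the number
of items lying in covered bins and then the number of bins. Two uncovered bins cannot coexist:
merging them either covers the union, raising the welfare, or keeps the covered items and saves a
bin. A covered bin that stays covered without one of its items `j` cannot exist either: splitting
`{j}` off either covers `{j}`, raising the welfare, or takes an item out of the covered bins.
-/

open Finset

/-- Total size of the items in a bin. -/
def binSize {n : ℕ} (a : Fin n → ℕ) (B : Finset (Fin n)) : ℕ := ∑ j ∈ B, a j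

/-- The social welfare of a partition: the number of covered bins. -/
def welfare {n : ℕ} (a : Fin n → ℕ) (b : ℕ)
    (π : Finpartition (univ : Finset (Fin n))) : ℕ :=
  (π.parts.filter fun B => b ≤ binSize a B).card

/-- The payoff of item `j` when it lies in bin `B`. -/
def payoffIn {n : ℕ} (a : Fin n → ℕ) (b : ℕ) (j : Fin n) (B : Finset (Fin n)) : ℚ :=
  if b ≤ binSize a B then (a j : ℚ) / (binSize a B : ℚ) else 0

/-- Nash equilibrium. -/
def IsNE {n : ℕ} (a : Fin n → ℕ) (b : ℕ)
    (π : Finpartition (univ : Finset (Fin n))) : Prop :=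
  (∀ j : Fin n, ∀ B ∈ π.parts, j ∉ B →
      payoffIn a b j (insert j B) ≤ payoffIn a b j (π.part j)) ∧
  ∀ j : Fin n, payoffIn a b j {j} ≤ payoffIn a b j (π.part j)

/-- A partition is reasonable if at most one bin is uncovered. -/
def Reasonable {n : ℕ} (a : Fin n → ℕ) (b : ℕ)
    (π : Finpartition (univ : Finset (Fin n))) : Prop :=
  (π.parts.filter fun B => binSize a B < b).card ≤ 1

/-- A bin is minimal covered if it is covered and removing any member uncovers it. -/
def MinimalCovered {n : ℕ} (a : Fin n → ℕ) (b : ℕ) (B : Finset (Fin n)) : Prop :=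
  b ≤ binSize a B ∧ ∀ j ∈ B, binSize a (B.erase j) < b

/-- A partition is rational if it is reasonable and every covered bin is minimal covered. -/
def RationalPartition {n : ℕ} (a : Fin n → ℕ) (b : ℕ)
    (π : Finpartition (univ : Finset (Fin n))) : Prop :=
  Reasonable a b π ∧ ∀ B ∈ π.parts, b ≤ binSize a B → MinimalCovered a b B

/-- `B_m(π)`: the unique uncovered bin of a (rational) partition if one exists, `∅` otherwise. -/
def uncoveredBin {n : ℕ} (a : Fin n → ℕ) (b : ℕ)
    (π : Finpartition (univ : Finset (Fin n))) : Finset (Fin n) :=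
  (π.parts.filter fun B => binSize a B < b).sup id

/-- `δ(B) = s(B)` if `B` is covered, `+∞` otherwise. -/
def delta {n : ℕ} (a : Fin n → ℕ) (b : ℕ) (B : Finset (Fin n)) : ℕ∞ :=
  if b ≤ binSize a B then (binSize a B : ℕ∞) else ⊤

/-- Fireable Nash equilibrium of type (I). -/
def IsFNE1 {n : ℕ} (a : Fin n → ℕ) (b : ℕ)
    (π : Finpartition (univ : Finset (Fin n))) : Prop :=
  RationalPartition a b π ∧
  ¬ ∃ j : Fin n, b ≤ binSize a (π.part j) ∧
      MinimalCovered a b (insert j (uncoveredBin a b π)) ∧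
      binSize a (uncoveredBin a b π) + a j < binSize a (π.part j)

/-- Fireable Nash equilibrium of type (II). -/
def IsFNE2 {n : ℕ} (a : Fin n → ℕ) (b : ℕ)
    (π : Finpartition (univ : Finset (Fin n))) : Prop :=
  RationalPartition a b π ∧
  ¬ ∃ (j : Fin n) (E : Finset (Fin n)), b ≤ binSize a (π.part j) ∧
      E ⊆ uncoveredBin a b π ∧
      MinimalCovered a b (insert j (uncoveredBin a b π \ E)) ∧
      binSize a (uncoveredBin a b π \ E) + a j < binSize a (π.part j)

/-- Fireable Nash equilibrium of type (III). -/
def IsFNE3 {n : ℕ} (a : Fin n → ℕ) (b : ℕ)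
    (π : Finpartition (univ : Finset (Fin n))) : Prop :=
  RationalPartition a b π ∧
  ¬ ∃ (j : Fin n) (Bi E : Finset (Fin n)), Bi ∈ π.parts ∧ j ∉ Bi ∧ E ⊆ Bi ∧
      MinimalCovered a b (insert j (Bi \ E)) ∧
      ((binSize a (Bi \ E) + a j : ℕ) : ℕ∞) < min (delta a b Bi) (delta a b (π.part j))

/-- Modified strong Nash equilibrium. -/
def IsMSNE {n : ℕ} (a : Fin n → ℕ) (b : ℕ)
    (π : Finpartition (univ : Finset (Fin n))) : Prop :=
  RationalPartition a b π ∧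
  ¬ ∃ (Bi E : Finset (Fin n)), Bi ∈ π.parts ∧ b ≤ binSize a Bi ∧ E ⊆ Bi ∧
      binSize a (uncoveredBin a b π) < binSize a (Bi \ E) ∧
      MinimalCovered a b (uncoveredBin a b π ∪ E)

/-- Strong Nash equilibrium. -/
def IsSNE {n : ℕ} (a : Fin n → ℕ) (b : ℕ)
    (π : Finpartition (univ : Finset (Fin n))) : Prop :=
  ¬ ∃ B : Finset (Fin n), b ≤ binSize a B ∧
      ∀ j ∈ B, binSize a (π.part j) < b ∨ binSize a B < binSize a (π.part j)

/-- `F` is a minimum subset w.r.t. `(E, b)`. -/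
def IsMinSubset {n : ℕ} (a : Fin n → ℕ) (b : ℕ) (F E : Finset (Fin n)) : Prop :=
  F ⊆ E ∧ b ≤ binSize a F ∧ ∀ G ⊆ E, b ≤ binSize a G → binSize a F ≤ binSize a G

namespace Finpartition

variable {α : Type*} [DistribLattice α] [OrderBot α] [DecidableEq α] {a u : α}

lemma disjoint_sup_of_mem_sdiff (P : Finpartition a) {S : Finset α} (hS : S ⊆ P.parts) {x : α}
    (hx : x ∈ P.parts \ S) : Disjoint x (S.sup id) := by
  rw [Finset.mem_sdiff] at hx
  exact Finset.disjoint_sup_right.2 fun y hy ↦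
    P.disjoint hx.1 (hS hy) (ne_of_mem_of_not_mem hy hx.2).symm

def replace (P : Finpartition a) {S : Finset α} (hS : S ⊆ P.parts) (Q : Finpartition u)
    (hu : S.sup id = u) : Finpartition a where
  parts := P.parts \ S ∪ Q.parts
  supIndep := by
    rw [Finset.supIndep_iff_pairwiseDisjoint, coe_union, Set.pairwiseDisjoint_union]
    refine ⟨P.disjoint.subset (by simp), Q.disjoint, fun x hx y hy _ ↦ ?_⟩
    exact (P.disjoint_sup_of_mem_sdiff hS hx).mono_right (hu ▸ Q.le hy)
  sup_parts := by
    rw [sup_union, Q.sup_parts, ← hu, ← sup_union, sdiff_union_of_subset hS, P.sup_parts]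
  bot_notMem h := (mem_union.1 h).elim (fun h ↦ P.bot_notMem (mem_sdiff.1 h).1) Q.bot_notMem

variable {M : Type*} [AddCommMonoid M]

lemma sum_replace_add (P : Finpartition a) {S : Finset α} (hS : S ⊆ P.parts)
    (Q : Finpartition u) (hu : S.sup id = u) (g : α → M) :
    ∑ x ∈ (P.replace hS Q hu).parts, g x + ∑ x ∈ S, g x =
      ∑ x ∈ P.parts, g x + ∑ x ∈ Q.parts, g x := by
  have hdisj : Disjoint (P.parts \ S) Q.parts := by
    refine Finset.disjoint_left.2 fun x hx hxQ ↦ Q.ne_bot hxQ ?_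
    exact (P.disjoint_sup_of_mem_sdiff hS hx).eq_bot_of_le (hu ▸ Q.le hxQ)
  rw [replace, sum_union hdisj, ← sum_sdiff hS]
  abel

lemma exists_sum_merge (P : Finpartition a) {x y : α} (hx : x ∈ P.parts) (hy : y ∈ P.parts)
    (hxy : x ≠ y) :
    ∃ P' : Finpartition a, ∀ g : α → M,
      ∑ z ∈ P'.parts, g z + (g x + g y) = ∑ z ∈ P.parts, g z + g (x ⊔ y) := by
  have hS : {x, y} ⊆ P.parts := insert_subset hx (singleton_subset_iff.2 hy)
  have hxy_ne_bot : x ⊔ y ≠ ⊥ := fun h ↦ P.ne_bot hx (eq_bot_mono le_sup_left h)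
  refine ⟨P.replace hS (indiscrete hxy_ne_bot) (by simp), fun g ↦ ?_⟩
  simpa [sum_pair hxy] using P.sum_replace_add hS (indiscrete hxy_ne_bot) (by simp) g

lemma exists_sum_split (P : Finpartition a) {t c d : α} (ht : t ∈ P.parts) (hc : c ≠ ⊥)
    (hd : d ≠ ⊥) (hcd : Disjoint c d) (hcdt : c ⊔ d = t) :
    ∃ P' : Finpartition a, ∀ g : α → M,
      ∑ z ∈ P'.parts, g z + g t = ∑ z ∈ P.parts, g z + (g c + g d) := by
  have hS : {t} ⊆ P.parts := singleton_subset_iff.2 ht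
  let Q : Finpartition t := (indiscrete hc).extend hd hcd hcdt
  have hdc : d ∉ ({c} : Finset α) := by
    rw [mem_singleton]; rintro rfl; exact hd (disjoint_self.1 hcd)
  refine ⟨P.replace hS Q (by simp), fun g ↦ ?_⟩
  simpa [Q, sum_insert hdc, add_comm] using P.sum_replace_add hS Q (by simp) g

end Finpartition

section BinCovering

variable {n : ℕ} (a : Fin n → ℕ) (b : ℕ)

def coveredItems (π : Finpartition (univ : Finset (Fin n))) : ℕ :=
  ∑ B ∈ π.parts, if b ≤ binSize a B then #B else 0

lemma welfare_eq_sum (π : Finpartition (univ : Finset (Fin n))) :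
    welfare a b π = ∑ B ∈ π.parts, if b ≤ binSize a B then 1 else 0 :=
  card_filter _ _

def IsLexOptimal (π : Finpartition (univ : Finset (Fin n))) : Prop :=
  (∀ σ, welfare a b σ ≤ welfare a b π) ∧
    ∀ σ, welfare a b σ = welfare a b π →
      toLex (coveredItems a b π, #π.parts) ≤ toLex (coveredItems a b σ, #σ.parts)

lemma exists_isLexOptimal : ∃ π, IsLexOptimal a b π := by
  obtain ⟨π₀, hπ₀⟩ := Finite.exists_max (welfare a b)
  have hne : (univ.filter fun σ ↦ welfare a b σ = welfare a b π₀).Nonempty := ⟨π₀, by simp⟩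
  obtain ⟨π, hπ, hmin⟩ := exists_min_image _
    (fun σ ↦ toLex (coveredItems a b σ, #σ.parts)) hne
  simp only [mem_filter, mem_univ, true_and] at hπ hmin
  exact ⟨π, fun σ ↦ hπ ▸ hπ₀ σ, fun σ hσ ↦ hmin σ (hσ.trans hπ)⟩

variable {a b}

lemma IsLexOptimal.reasonable {π : Finpartition (univ : Finset (Fin n))}
    (hπ : IsLexOptimal a b π) : Reasonable a b π := by
  by_contra h
  obtain ⟨B₁, hB₁, B₂, hB₂, hne⟩ := one_lt_card.1 (not_le.1 h)
  rw [mem_filter] at hB₁ hB₂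
  obtain ⟨σ, hσ⟩ := π.exists_sum_merge (M := ℕ) hB₁.1 hB₂.1 hne
  have hw : welfare a b σ = welfare a b π + if b ≤ binSize a (B₁ ∪ B₂) then 1 else 0 := by
    simpa [welfare_eq_sum, not_le.2 hB₁.2, not_le.2 hB₂.2]
      using hσ fun B ↦ if b ≤ binSize a B then 1 else 0
  have hc : coveredItems a b σ = coveredItems a b π +
      if b ≤ binSize a (B₁ ∪ B₂) then #(B₁ ∪ B₂) else 0 := by
    simpa [coveredItems, not_le.2 hB₁.2, not_le.2 hB₂.2]
      using hσ fun B ↦ if b ≤ binSize a B then #B else 0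
  have hk : #σ.parts + 2 = #π.parts + 1 := by simpa using hσ fun _ ↦ 1
  by_cases hU : b ≤ binSize a (B₁ ∪ B₂)
  · rw [if_pos hU] at hw
    exact absurd (hπ.1 σ) (by omega)
  · rw [if_neg hU] at hw hc
    exact absurd (hπ.2 σ (by omega))
      (not_le.2 (Prod.Lex.toLex_lt_toLex.2 (Or.inr ⟨by omega, by omega⟩)))

lemma IsLexOptimal.minimalCovered (hb : 0 < b) {π : Finpartition (univ : Finset (Fin n))}
    (hπ : IsLexOptimal a b π) {B : Finset (Fin n)} (hB : B ∈ π.parts)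
    (hcov : b ≤ binSize a B) : MinimalCovered a b B := by
  refine ⟨hcov, fun j hj ↦ not_le.1 fun hrest ↦ ?_⟩
  have hrest_ne : B.erase j ≠ ∅ := by
    rintro h; rw [h, binSize, sum_empty] at hrest; omega
  obtain ⟨σ, hσ⟩ := π.exists_sum_split (M := ℕ) hB hrest_ne (singleton_ne_empty j)
    (disjoint_singleton_right.2 (notMem_erase j B)) (erase_union_eq j B hj)
  have hsingle : binSize a {j} = a j := sum_singleton a j
  have hw : welfare a b σ + 1 = welfare a b π + (1 + if b ≤ a j then 1 else 0) := by
    simpa [welfare_eq_sum, hcov, hrest, hsingle]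
      using hσ fun B ↦ if b ≤ binSize a B then 1 else 0
  have hc : coveredItems a b σ + #B =
      coveredItems a b π + (#(B.erase j) + if b ≤ a j then 1 else 0) := by
    simpa [coveredItems, hcov, hrest, hsingle]
      using hσ fun B ↦ if b ≤ binSize a B then #B else 0
  have hcard : #(B.erase j) + 1 = #B := card_erase_add_one hj
  by_cases hjcov : b ≤ a j
  · rw [if_pos hjcov] at hw
    exact absurd (hπ.1 σ) (by omega)
  · rw [if_neg hjcov] at hw hc
    exact absurd (hπ.2 σ (by omega))
      (not_le.2 (Prod.Lex.toLex_lt_toLex.2 (Or.inl (by omega))))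

end BinCovering

theorem stmt4_general (n : ℕ) (a : Fin n → ℕ) (b : ℕ)
    (hab : ∀ j, a j < b) :
    ∃ π : Finpartition (univ : Finset (Fin n)),
      RationalPartition a b π ∧ ∀ σ : Finpartition (univ : Finset (Fin n)),
        welfare a b σ ≤ welfare a b π := by
  obtain ⟨π, hπ⟩ := exists_isLexOptimal a b
  refine ⟨π, ⟨hπ.reasonable, fun B hB hcov ↦ ?_⟩, hπ.1⟩
  obtain ⟨j, -⟩ := π.nonempty_of_mem_parts hB
  exact hπ.minimalCovered ((Nat.zero_le _).trans_lt (hab j)) hB hcov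

/-- every instance admits a rational partition whose welfare equals `OPT`. -/
theorem stmt4 (n : ℕ) (hn : 1 ≤ n) (a : Fin n → ℕ) (b : ℕ)
    (ha : ∀ j, 0 < a j) (hab : ∀ j, a j < b) :
    ∃ π : Finpartition (univ : Finset (Fin n)),
      RationalPartition a b π ∧ ∀ σ : Finpartition (univ : Finset (Fin n)),
        welfare a b σ ≤ welfare a b π :=
  stmt4_general n a b hab
end

section
/- For every integer n ≥ 2, consider the instance of selfish bin covering with bin volume b = 2n, 2n items of size 2n−2, and 4n items of size 1. The partition π consisting of n bins each containing two items of size 2n−2 and two bins each containing 2n items of size 1 is an FNE(III), with p(π) = n+2, while OPT = 2n. Consequently, the price of anarchy with respect to FNE(III) is at most 1/2. -/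
open Finset

/-!
Every bin of the equilibrium is covered: the two bins of unit items have size exactly `b = 2n`, and
each pair of large items has size `4n - 4 ≥ b`, each of its items weighing half of it. A firing
deviation creates a covered bin strictly smaller than both the bin the item leaves and the bin it
raids, so neither of these has size `b`. But then both consist of items weighing at least half their
bin, and the new bin (the newcomer plus at least one old item, since items are smaller than `b`) is
at least as large as one of them. The optimum is at most the total size over the bin volume,
`4n² / 2n`, and is attained by bins of one large and two unit items.
-/

namespace Finpartition

variable {α β : Type*} [Fintype α] [DecidableEq α] [DecidableEq β]

def ofLabel (c : α → β) : Finpartition (univ : Finset α) := ofSetoid (Setoid.ker c)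

lemma ofLabel_parts (c : α → β) :
    (ofLabel c).parts = (univ.image c).image fun l => ({x | c x = l} : Finset α) := by
  rw [ofLabel, ofSetoid, ofSetSetoid_parts, image_image]
  congr 1
  ext x y
  simp only [Function.comp_apply, mem_filter, mem_univ, true_and]
  exact eq_comm

lemma sum_parts_ofLabel {M : Type*} [AddCommMonoid M] (c : α → β) (f : Finset α → M) :
    ∑ B ∈ (ofLabel c).parts, f B = ∑ l ∈ univ.image c, f ({x | c x = l} : Finset α) := by
  rw [ofLabel_parts, sum_image]
  intro l hl l' _ hll'
  obtain ⟨x, -, rfl⟩ := mem_image.1 hl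
  have hx : x ∈ ({y | c y = l'} : Finset α) := by
    simp only at hll'
    simp [← hll']
  exact (mem_filter.1 hx).2

end Finpartition

section BinCovering

variable {N : ℕ} {a : Fin N → ℕ} {b : ℕ}

lemma sum_binSize_parts (a : Fin N → ℕ) (π : Finpartition (univ : Finset (Fin N))) :
    ∑ B ∈ π.parts, binSize a B = binSize a univ := by
  rw [binSize]
  conv_rhs => rw [← π.biUnion_parts]
  rw [sum_biUnion π.supIndep.pairwiseDisjoint]
  rfl

lemma welfare_mul_le_binSize_univ (π : Finpartition (univ : Finset (Fin N))) :
    welfare a b π * b ≤ binSize a univ :=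
  calc welfare a b π * b ≤ ∑ B ∈ π.parts.filter (b ≤ binSize a ·), binSize a B := by
        rw [welfare, ← smul_eq_mul]
        exact card_nsmul_le_sum _ _ _ fun B hB => (mem_filter.1 hB).2
    _ ≤ ∑ B ∈ π.parts, binSize a B := sum_le_sum_of_subset (filter_subset _ _)
    _ = binSize a univ := sum_binSize_parts a π

lemma welfare_eq_card_parts {π : Finpartition (univ : Finset (Fin N))}
    (hcov : ∀ B ∈ π.parts, b ≤ binSize a B) : welfare a b π = #π.parts := by
  rw [welfare, filter_true_of_mem hcov]

lemma binSize_erase_add {B : Finset (Fin N)} {j : Fin N} (hj : j ∈ B) :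
    binSize a (B.erase j) + a j = binSize a B :=
  sum_erase_add B a hj

lemma minimalCovered_of_binSize_eq {B : Finset (Fin N)} (hpos : ∀ j ∈ B, 0 < a j)
    (hB : binSize a B = b) : MinimalCovered a b B := by
  refine ⟨hB.ge, fun j hj => ?_⟩
  have := binSize_erase_add (a := a) hj
  have := hpos j hj
  omega

lemma minimalCovered_of_le_two_mul {B : Finset (Fin N)} (hlt : ∀ j ∈ B, a j < b)
    (hcov : b ≤ binSize a B) (hheavy : ∀ j ∈ B, binSize a B ≤ 2 * a j) :
    MinimalCovered a b B := by
  refine ⟨hcov, fun j hj => ?_⟩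
  have := binSize_erase_add (a := a) hj
  have := hlt j hj
  have := hheavy j hj
  omega

variable {π : Finpartition (univ : Finset (Fin N))}

lemma rationalPartition_of_forall_parts (hpos : ∀ j, 0 < a j) (hlt : ∀ j, a j < b)
    (hπ : ∀ B ∈ π.parts, binSize a B = b ∨
      (b ≤ binSize a B ∧ ∀ j ∈ B, binSize a B ≤ 2 * a j)) :
    RationalPartition a b π := by
  have hcov : ∀ B ∈ π.parts, b ≤ binSize a B := fun B hB => by
    rcases hπ B hB with h | h <;> omega
  refine ⟨?_, fun B hB _ => ?_⟩
  · rw [Reasonable, filter_false_of_mem fun B hB => not_lt.2 (hcov B hB), card_empty]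
    exact zero_le_one
  · rcases hπ B hB with h | ⟨hcovB, hheavy⟩
    · exact minimalCovered_of_binSize_eq (fun j _ => hpos j) h
    · exact minimalCovered_of_le_two_mul (fun j _ => hlt j) hcovB hheavy

theorem isFNE3_of_forall_parts (hpos : ∀ j, 0 < a j) (hlt : ∀ j, a j < b)
    (hπ : ∀ B ∈ π.parts, binSize a B = b ∨
      (b ≤ binSize a B ∧ ∀ j ∈ B, binSize a B ≤ 2 * a j)) :
    IsFNE3 a b π := by
  refine ⟨rationalPartition_of_forall_parts hpos hlt hπ, ?_⟩
  rintro ⟨j, Bi, E, hBi, hjBi, -, ⟨hcovNew, -⟩, hlt'⟩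
  have hPj := π.part_mem.2 (mem_univ j)
  have hdelta : ∀ B ∈ π.parts, delta a b B = binSize a B := fun B hB => by
    rcases hπ B hB with h | h <;> exact if_pos (by omega)
  rw [hdelta Bi hBi, hdelta _ hPj, lt_min_iff] at hlt'
  norm_cast at hlt'
  obtain ⟨hltBi, hltPj⟩ := hlt'
  have hnew : b ≤ a j + binSize a (Bi \ E) := by
    rwa [binSize, sum_insert fun h => hjBi (mem_sdiff.1 h).1] at hcovNew
  rcases hπ _ hPj with h | ⟨-, hheavyPj⟩
  · omega
  rcases hπ _ hBi with h | ⟨-, hheavyBi⟩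
  · omega
  have hj := hheavyPj j (π.mem_part (mem_univ j))
  rcases (Bi \ E).eq_empty_or_nonempty with hempty | ⟨z, hz⟩
  · have : binSize a (Bi \ E) = 0 := by rw [hempty]; rfl
    have := hlt j
    omega
  · have hzBi := hheavyBi z (mem_sdiff.1 hz).1
    have : a z ≤ binSize a (Bi \ E) := single_le_sum (fun _ _ => Nat.zero_le _) hz
    omega

end BinCovering

namespace FNE3LowerBound

open Finpartition

variable (n : ℕ)

def itemSize (j : Fin (6 * n)) : ℕ := if (j : ℕ) < 2 * n then 2 * n - 2 else 1

def pairBin (i : ℕ) : Finset (Fin (6 * n)) := {j | (j : ℕ) = 2 * i ∨ (j : ℕ) = 2 * i + 1}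

def unitBinLow : Finset (Fin (6 * n)) := {j | 2 * n ≤ (j : ℕ) ∧ (j : ℕ) < 4 * n}

def unitBinHigh : Finset (Fin (6 * n)) := {j | 4 * n ≤ (j : ℕ)}

def eqLabel (j : Fin (6 * n)) : ℕ :=
  if (j : ℕ) < 2 * n then (j : ℕ) / 2 else if (j : ℕ) < 4 * n then n else n + 1

def optLabel (j : Fin (6 * n)) : ℕ := if (j : ℕ) < 2 * n then j else ((j : ℕ) - 2 * n) / 2

def eqPartition : Finpartition (univ : Finset (Fin (6 * n))) := ofLabel (eqLabel n)

def optPartition : Finpartition (univ : Finset (Fin (6 * n))) := ofLabel (optLabel n)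

variable {n}

lemma itemSize_pos (hn : 2 ≤ n) (j : Fin (6 * n)) : 0 < itemSize n j := by
  unfold itemSize; split_ifs <;> omega

lemma itemSize_lt (j : Fin (6 * n)) : itemSize n j < 2 * n := by
  have := j.isLt
  unfold itemSize; split_ifs <;> omega

lemma image_eqLabel (hn : 1 ≤ n) : univ.image (eqLabel n) = range (n + 2) := by
  ext l
  simp only [mem_image, mem_univ, true_and, mem_range]
  constructor
  · rintro ⟨j, rfl⟩
    unfold eqLabel; split_ifs <;> omega
  · intro hl
    rcases lt_or_ge l n with hl' | hl'
    · exact ⟨⟨2 * l, by omega⟩, by simp only [eqLabel]; split_ifs <;> omega⟩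
    · obtain h | h : l = n ∨ l = n + 1 := by omega
      · exact ⟨⟨2 * n, by omega⟩, by simp only [eqLabel]; split_ifs <;> omega⟩
      · exact ⟨⟨4 * n, by omega⟩, by simp only [eqLabel]; split_ifs <;> omega⟩

lemma fiber_eqLabel_of_lt {i : ℕ} (hi : i < n) :
    ({j | eqLabel n j = i} : Finset (Fin (6 * n))) = pairBin n i := by
  ext j
  rw [pairBin, mem_filter_univ, mem_filter_univ, eqLabel]
  split_ifs <;> omega

lemma fiber_eqLabel_self :
    ({j | eqLabel n j = n} : Finset (Fin (6 * n))) = unitBinLow n := by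
  ext j
  rw [unitBinLow, mem_filter_univ, mem_filter_univ, eqLabel]
  split_ifs <;> omega

lemma fiber_eqLabel_succ :
    ({j | eqLabel n j = n + 1} : Finset (Fin (6 * n))) = unitBinHigh n := by
  ext j
  rw [unitBinHigh, mem_filter_univ, mem_filter_univ, eqLabel]
  split_ifs <;> omega

lemma mem_eqPartition_parts (hn : 1 ≤ n) {B : Finset (Fin (6 * n))} :
    B ∈ (eqPartition n).parts ↔
      B = unitBinLow n ∨ B = unitBinHigh n ∨ ∃ i < n, B = pairBin n i := by
  rw [eqPartition, ofLabel_parts, image_eqLabel hn]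
  simp only [mem_image, mem_range]
  constructor
  · rintro ⟨l, hl, rfl⟩
    rcases lt_trichotomy l n with hl' | rfl | hl'
    · exact Or.inr (Or.inr ⟨l, hl', fiber_eqLabel_of_lt hl'⟩)
    · exact Or.inl fiber_eqLabel_self
    · obtain rfl : l = n + 1 := by omega
      exact Or.inr (Or.inl fiber_eqLabel_succ)
  · rintro (rfl | rfl | ⟨i, hi, rfl⟩)
    · exact ⟨n, by omega, fiber_eqLabel_self⟩
    · exact ⟨n + 1, by omega, fiber_eqLabel_succ⟩
    · exact ⟨i, by omega, fiber_eqLabel_of_lt hi⟩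

lemma sum_eqPartition_parts (hn : 1 ≤ n) {M : Type*} [AddCommMonoid M]
    (f : Finset (Fin (6 * n)) → M) :
    ∑ B ∈ (eqPartition n).parts, f B =
      ∑ i ∈ range n, f (pairBin n i) + f (unitBinLow n) + f (unitBinHigh n) := by
  rw [eqPartition, sum_parts_ofLabel, image_eqLabel hn, sum_range_succ, sum_range_succ,
    fiber_eqLabel_self, fiber_eqLabel_succ]
  congr 2
  exact sum_congr rfl fun i hi => by rw [fiber_eqLabel_of_lt (mem_range.1 hi)]

lemma binSize_pairBin {i : ℕ} (hi : i < n) :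
    binSize (itemSize n) (pairBin n i) = 2 * (2 * n - 2) := by
  have : pairBin n i = {⟨2 * i, by omega⟩, ⟨2 * i + 1, by omega⟩} := by
    ext j
    simp [pairBin, Fin.ext_iff]
  rw [this, binSize, sum_pair (by simp [Fin.ext_iff])]
  simp only [itemSize]
  rw [if_pos (by omega), if_pos (by omega)]
  ring

lemma binSize_eq_card_of_forall_le {B : Finset (Fin (6 * n))}
    (hB : ∀ j ∈ B, 2 * n ≤ (j : ℕ)) :
    binSize (itemSize n) B = #B := by
  rw [binSize, sum_const_nat (m := 1), mul_one]
  intro j hj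
  rw [itemSize, if_neg (not_lt.2 (hB j hj))]

lemma binSize_unitBinLow : binSize (itemSize n) (unitBinLow n) = 2 * n := by
  have : unitBinLow n = (Ico (2 * n) (4 * n)).attachFin fun m hm => by
      simp only [mem_Ico] at hm; omega := by
    ext j
    simp [unitBinLow, mem_attachFin]
  rw [binSize_eq_card_of_forall_le fun j hj => by rw [unitBinLow, mem_filter_univ] at hj; omega,
    this, card_attachFin, Nat.card_Ico]
  omega

lemma binSize_unitBinHigh : binSize (itemSize n) (unitBinHigh n) = 2 * n := by
  have : unitBinHigh n = (Ico (4 * n) (6 * n)).attachFin fun m hm => by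
      simp only [mem_Ico] at hm; omega := by
    ext j
    simp [unitBinHigh, mem_attachFin]
  rw [binSize_eq_card_of_forall_le fun j hj => by rw [unitBinHigh, mem_filter_univ] at hj; omega,
    this, card_attachFin, Nat.card_Ico]
  omega

lemma tight_or_heavy_of_mem_eqPartition_parts (hn : 2 ≤ n) :
    ∀ B ∈ (eqPartition n).parts, binSize (itemSize n) B = 2 * n ∨
      (2 * n ≤ binSize (itemSize n) B ∧
        ∀ j ∈ B, binSize (itemSize n) B ≤ 2 * itemSize n j) := by
  intro B hB
  rcases (mem_eqPartition_parts (by omega)).1 hB with rfl | rfl | ⟨i, hi, rfl⟩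
  · exact Or.inl binSize_unitBinLow
  · exact Or.inl binSize_unitBinHigh
  · refine Or.inr ⟨by rw [binSize_pairBin hi]; omega, fun j hj => ?_⟩
    rw [pairBin, mem_filter_univ] at hj
    rw [binSize_pairBin hi, itemSize, if_pos (by omega)]

lemma welfare_eqPartition (hn : 2 ≤ n) :
    welfare (itemSize n) (2 * n) (eqPartition n) = n + 2 := by
  have hcov : ∀ B ∈ (eqPartition n).parts, 2 * n ≤ binSize (itemSize n) B := fun B hB => by
    rcases tight_or_heavy_of_mem_eqPartition_parts hn B hB with h | h <;> omega
  rw [welfare_eq_card_parts hcov, card_eq_sum_ones, sum_eqPartition_parts (by omega)]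
  simp

lemma binSize_itemSize_univ (hn : 1 ≤ n) : binSize (itemSize n) univ = 2 * n * (2 * n) := by
  rw [← sum_binSize_parts _ (eqPartition n), sum_eqPartition_parts hn,
    sum_congr rfl fun i hi => binSize_pairBin (mem_range.1 hi), sum_const, card_range, smul_eq_mul,
    binSize_unitBinLow, binSize_unitBinHigh]
  obtain ⟨m, rfl⟩ := Nat.exists_eq_add_of_le hn
  rw [show 2 * (1 + m) - 2 = 2 * m by omega]
  ring

lemma welfare_le_two_mul (hn : 1 ≤ n) (σ : Finpartition (univ : Finset (Fin (6 * n)))) :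
    welfare (itemSize n) (2 * n) σ ≤ 2 * n := by
  refine Nat.le_of_mul_le_mul_right ?_ (by omega : 0 < 2 * n)
  rw [← binSize_itemSize_univ hn]
  exact welfare_mul_le_binSize_univ σ

lemma image_optLabel : univ.image (optLabel n) = range (2 * n) := by
  ext l
  simp only [mem_image, mem_univ, true_and, mem_range]
  constructor
  · rintro ⟨j, rfl⟩
    have := j.isLt
    unfold optLabel; split_ifs <;> omega
  · intro hl
    exact ⟨⟨l, by omega⟩, by rw [optLabel, if_pos hl]⟩

lemma binSize_fiber_optLabel (hn : 1 ≤ n) {l : ℕ} (hl : l < 2 * n) :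
    binSize (itemSize n) {j | optLabel n j = l} = 2 * n := by
  have : ({j | optLabel n j = l} : Finset (Fin (6 * n))) =
      {⟨l, by omega⟩, ⟨2 * n + 2 * l, by omega⟩, ⟨2 * n + 2 * l + 1, by omega⟩} := by
    ext j
    rw [mem_filter_univ, optLabel]
    simp only [mem_insert, mem_singleton, Fin.ext_iff]
    split_ifs <;> omega
  rw [this, binSize, sum_insert (by simp [Fin.ext_iff]; omega), sum_pair (by simp [Fin.ext_iff])]
  simp only [itemSize]
  rw [if_pos hl, if_neg (by omega), if_neg (by omega)]
  omega

lemma welfare_optPartition (hn : 1 ≤ n) :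
    welfare (itemSize n) (2 * n) (optPartition n) = 2 * n := by
  have hcov : ∀ B ∈ (optPartition n).parts, 2 * n ≤ binSize (itemSize n) B := by
    simp only [optPartition, ofLabel_parts, image_optLabel, mem_image, mem_range]
    rintro B ⟨l, hl, rfl⟩
    exact (binSize_fiber_optLabel hn hl).ge
  rw [welfare_eq_card_parts hcov, card_eq_sum_ones, optPartition, sum_parts_ofLabel,
    image_optLabel]
  simp

end FNE3LowerBound

open FNE3LowerBound in
/-- the lower-bound instance for `PoA` w.r.t. FNE(III): bin volume `2n`,
`2n` items of size `2n-2` and `4n` items of size `1`.  The partition with `n` bins of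
two large items and two bins of `2n` small items is an FNE(III) with welfare `n+2`,
while `OPT = 2n`. -/
theorem stmt6 (n : ℕ) (hn : 2 ≤ n) :
    ∃ π : Finpartition (univ : Finset (Fin (6 * n))),
      ((univ.filter fun j : Fin (6 * n) => 2 * n ≤ (j : ℕ) ∧ (j : ℕ) < 4 * n) ∈ π.parts) ∧
      ((univ.filter fun j : Fin (6 * n) => 4 * n ≤ (j : ℕ)) ∈ π.parts) ∧
      (∀ i < n,
        (univ.filter fun j : Fin (6 * n) => (j : ℕ) = 2 * i ∨ (j : ℕ) = 2 * i + 1) ∈ π.parts) ∧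
      (∀ B ∈ π.parts,
        B = (univ.filter fun j : Fin (6 * n) => 2 * n ≤ (j : ℕ) ∧ (j : ℕ) < 4 * n) ∨
        B = (univ.filter fun j : Fin (6 * n) => 4 * n ≤ (j : ℕ)) ∨
        ∃ i < n,
          B = (univ.filter fun j : Fin (6 * n) => (j : ℕ) = 2 * i ∨ (j : ℕ) = 2 * i + 1)) ∧
      IsFNE3 (fun j : Fin (6 * n) => if (j : ℕ) < 2 * n then 2 * n - 2 else 1) (2 * n) π ∧
      welfare (fun j : Fin (6 * n) => if (j : ℕ) < 2 * n then 2 * n - 2 else 1) (2 * n) π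
        = n + 2 ∧
      (∀ σ : Finpartition (univ : Finset (Fin (6 * n))),
        welfare (fun j : Fin (6 * n) => if (j : ℕ) < 2 * n then 2 * n - 2 else 1) (2 * n) σ
          ≤ 2 * n) ∧
      (∃ σ : Finpartition (univ : Finset (Fin (6 * n))),
        welfare (fun j : Fin (6 * n) => if (j : ℕ) < 2 * n then 2 * n - 2 else 1) (2 * n) σ
          = 2 * n) := by
  have hparts (B) := mem_eqPartition_parts (n := n) (B := B) (by omega)
  exact ⟨eqPartition n, (hparts _).2 (Or.inl rfl), (hparts _).2 (Or.inr (Or.inl rfl)),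
    fun i hi => (hparts _).2 (Or.inr (Or.inr ⟨i, hi, rfl⟩)), fun B hB => (hparts B).1 hB,
    isFNE3_of_forall_parts (itemSize_pos hn) itemSize_lt
      (tight_or_heavy_of_mem_eqPartition_parts hn),
    welfare_eqPartition hn, welfare_le_two_mul (by omega),
    optPartition n, welfare_optPartition (by omega)⟩
end

section
/- For every rational partition π of an instance of selfish bin covering, there exists an FNE(III) partition π' of the same instance with p(π') ≥ p(π). -/
/-!
Among the rational partitions whose welfare is at least that of `π`, take one maximising the
potential `∑ 3⁻¹ ^ s(B)` over its covered bins `B`. If it were not an FNE(III), the deviating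
bin `N = (B_i ∖ E) ∪ {j}` could be formed: keep the covered bins other than `B_i` and
`B_{j,π}`, add `N`, and greedily split the remaining items into minimal covered bins and one
uncovered leftover. At most two covered bins, each larger than `s(N)`, disappear, so the
potential strictly increases. When both `B_i` and `B_{j,π}` were covered, the remaining items
weigh more than `s(B_{j,π}) ≥ b`, so the greedy split yields a further covered bin and the
welfare does not drop.
-/

open Finset

section Bins

variable {n : ℕ} (a : Fin n → ℕ) (b : ℕ)

lemma binSize_mono {s t : Finset (Fin n)} (h : s ⊆ t) : binSize a s ≤ binSize a t :=
  sum_le_sum_of_subset h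

lemma binSize_union {s t : Finset (Fin n)} (h : Disjoint s t) :
    binSize a (s ∪ t) = binSize a s + binSize a t :=
  sum_union h

variable {a b}

lemma MinimalCovered.nonempty {B : Finset (Fin n)} (hB : MinimalCovered a b B) (hb : 0 < b) :
    B.Nonempty := by
  rw [nonempty_iff_ne_empty]
  rintro rfl
  have : binSize a ∅ = 0 := sum_empty
  exact absurd hB.1 (by omega)

lemma exists_minimalCovered_subset {U : Finset (Fin n)} (hU : b ≤ binSize a U) :
    ∃ F ⊆ U, MinimalCovered a b F := by
  induction U using Finset.strongInduction with
  | H U ih =>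
    by_cases hmin : ∀ j ∈ U, binSize a (U.erase j) < b
    · exact ⟨U, subset_rfl, hU, hmin⟩
    · push Not at hmin
      obtain ⟨j, hj, hcov⟩ := hmin
      obtain ⟨F, hF, hFmin⟩ := ih _ (erase_ssubset hj) hcov
      exact ⟨F, hF.trans (erase_subset _ _), hFmin⟩

lemma lt_binSize_of_lt_delta {v : ℕ} {B : Finset (Fin n)} (h : (v : ℕ∞) < delta a b B)
    (hB : b ≤ binSize a B) : v < binSize a B := by
  rw [delta, if_pos hB] at h
  exact_mod_cast h

end Bins

section Families

variable {n : ℕ} {a : Fin n → ℕ} {b : ℕ}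

def MinimalCoveredFamily (a : Fin n → ℕ) (b : ℕ) (C : Finset (Finset (Fin n))) : Prop :=
  (C : Set (Finset (Fin n))).PairwiseDisjoint id ∧ ∀ B ∈ C, MinimalCovered a b B

lemma MinimalCoveredFamily.subset {C C' : Finset (Finset (Fin n))}
    (hC : MinimalCoveredFamily a b C) (h : C' ⊆ C) : MinimalCoveredFamily a b C' :=
  ⟨hC.1.subset (by exact_mod_cast h), fun B hB => hC.2 B (h hB)⟩

lemma MinimalCoveredFamily.insert_of_disjoint {C : Finset (Finset (Fin n))} {N : Finset (Fin n)}
    (hC : MinimalCoveredFamily a b C) (hN : MinimalCovered a b N)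
    (hdisj : ∀ B ∈ C, Disjoint N B) : MinimalCoveredFamily a b (insert N C) := by
  refine ⟨?_, forall_mem_insert _ _ _ |>.2 ⟨hN, hC.2⟩⟩
  rw [coe_insert]
  exact hC.1.insert fun B hB _ => hdisj B hB

lemma disjoint_compl_sup {C : Finset (Finset (Fin n))} {B : Finset (Fin n)} (hB : B ∈ C) :
    Disjoint (univ \ C.sup id) B :=
  sdiff_disjoint.mono_right (le_sup (f := id) hB)

lemma exists_minimalCoveredFamily_superset (hb : 0 < b)
    {C : Finset (Finset (Fin n))} (hC : MinimalCoveredFamily a b C) :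
    ∃ C', C ⊆ C' ∧ MinimalCoveredFamily a b C' ∧ binSize a (univ \ C'.sup id) < b := by
  by_cases hrest : binSize a (univ \ C.sup id) < b
  · exact ⟨C, subset_rfl, hC, hrest⟩
  obtain ⟨F, hF, hFmin⟩ := exists_minimalCovered_subset (not_lt.1 hrest)
  have hFC : MinimalCoveredFamily a b (insert F C) :=
    hC.insert_of_disjoint hFmin fun B hB => (disjoint_compl_sup hB).mono_left hF
  obtain ⟨C', hsub, hC', hrest'⟩ := exists_minimalCoveredFamily_superset hb hFC
  exact ⟨C', (subset_insert _ _).trans hsub, hC', hrest'⟩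
termination_by (univ \ C.sup id).card
decreasing_by
  obtain ⟨x, hx⟩ := hFmin.nonempty hb
  refine card_lt_card (ssubset_iff_of_subset ?_ |>.2 ⟨x, hF hx, ?_⟩)
  · simp only [sup_insert, id]
    exact sdiff_subset_sdiff subset_rfl subset_union_right
  · simp [hx]

end Families

section Partitions

variable {n : ℕ} (a : Fin n → ℕ) (b : ℕ)

def coveredParts (π : Finpartition (univ : Finset (Fin n))) : Finset (Finset (Fin n)) :=
  π.parts.filter fun B => b ≤ binSize a B

/-- Base `3⁻¹` rather than `2⁻¹` so that two terms `3⁻¹ ^ (v + 1)` stay strictly below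
`3⁻¹ ^ v`. -/
def potential (π : Finpartition (univ : Finset (Fin n))) : ℚ :=
  ∑ B ∈ coveredParts a b π, (3⁻¹ : ℚ) ^ binSize a B

variable {a b}

lemma welfare_eq_card_coveredParts (π : Finpartition (univ : Finset (Fin n))) :
    welfare a b π = (coveredParts a b π).card :=
  rfl

lemma RationalPartition.minimalCoveredFamily {π : Finpartition (univ : Finset (Fin n))}
    (hπ : RationalPartition a b π) : MinimalCoveredFamily a b (coveredParts a b π) :=
  ⟨π.disjoint.subset (by exact_mod_cast filter_subset _ _), fun B hB =>
    hπ.2 B (mem_filter.1 hB).1 (mem_filter.1 hB).2⟩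

lemma MinimalCoveredFamily.exists_rationalPartition {C : Finset (Finset (Fin n))}
    (hC : MinimalCoveredFamily a b C) (hrest : binSize a (univ \ C.sup id) < b) :
    ∃ π, RationalPartition a b π ∧ coveredParts a b π = C := by
  have hb : 0 < b := by omega
  set R := univ \ C.sup id
  have hindep : (insert R C).SupIndep id := by
    rw [supIndep_iff_pairwiseDisjoint, coe_insert]
    exact hC.1.insert fun B hB _ => disjoint_compl_sup hB
  have hsup : (insert R C).sup id = univ := by
    rw [sup_insert, id, sup_eq_union, sdiff_union_of_subset (subset_univ _)]
  let π := Finpartition.ofErase (insert R C) hindep hsup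
  have hcov : coveredParts a b π = C := by
    ext B
    simp only [coveredParts, π, Finpartition.ofErase_parts, mem_filter, mem_erase, mem_insert,
      bot_eq_empty]
    constructor
    · rintro ⟨⟨-, rfl | hB⟩, hBcov⟩
      · omega
      · exact hB
    · intro hB
      exact ⟨⟨((hC.2 B hB).nonempty hb).ne_empty, Or.inr hB⟩, (hC.2 B hB).1⟩
  refine ⟨π, ⟨?_, fun B hB hBcov => hC.2 B ?_⟩, hcov⟩
  · refine (card_le_card (t := {R}) fun B hB => ?_).trans (card_singleton R).le
    obtain ⟨hBπ, hBunc⟩ := mem_filter.1 hB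
    obtain ⟨-, rfl | hBC⟩ := by simpa [π] using hBπ
    · exact mem_singleton_self _
    · exact absurd (hC.2 B hBC).1 (not_le.2 hBunc)
  · exact hcov ▸ mem_filter.2 ⟨hB, hBcov⟩

lemma MinimalCoveredFamily.exists_rationalPartition_superset (hb : 0 < b)
    {C : Finset (Finset (Fin n))} (hC : MinimalCoveredFamily a b C) :
    ∃ π, RationalPartition a b π ∧ C ⊆ coveredParts a b π ∧
      (b ≤ binSize a (univ \ C.sup id) → C ⊂ coveredParts a b π) := by
  obtain ⟨C', hCC', hC', hrest⟩ := exists_minimalCoveredFamily_superset hb hC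
  obtain ⟨π, hπ, hcov⟩ := hC'.exists_rationalPartition hrest
  refine ⟨π, hπ, hcov ▸ hCC', fun hcovC => hcov ▸ hCC'.ssubset_of_ne ?_⟩
  rintro rfl
  omega

end Partitions

lemma sum_inv_three_pow_lt {ι : Type*} {s : Finset ι} (f : ι → ℕ) {v : ℕ} (hs : s.card ≤ 2)
    (hf : ∀ i ∈ s, v < f i) : ∑ i ∈ s, (3⁻¹ : ℚ) ^ f i < 3⁻¹ ^ v := by
  have hcard : (s.card : ℚ) ≤ 2 := by exact_mod_cast hs
  have hpos : (0 : ℚ) < 3⁻¹ ^ v := by positivity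
  calc ∑ i ∈ s, (3⁻¹ : ℚ) ^ f i ≤ ∑ _i ∈ s, (3⁻¹ : ℚ) ^ (v + 1) :=
        sum_le_sum fun i hi => pow_le_pow_of_le_one (by norm_num) (by norm_num) (hf i hi)
    _ = s.card * 3⁻¹ ^ v / 3 := by rw [sum_const, nsmul_eq_mul, pow_succ]; ring
    _ < 3⁻¹ ^ v := by nlinarith

section Improvement

variable {n : ℕ} {a : Fin n → ℕ} {b : ℕ}

/-- The leftover contains `(X ∪ Y) \ N`, of size `s(X) + s(Y) - s(N) > s(Y)`. -/
lemma lt_binSize_compl_sup_insert {K : Finset (Finset (Fin n))} {N X Y : Finset (Fin n)}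
    (hXY : Disjoint X Y) (hN : N ⊆ X ∪ Y) (hK : ∀ B ∈ K, Disjoint (X ∪ Y) B)
    (hNX : binSize a N < binSize a X) :
    binSize a Y < binSize a (univ \ (insert N K).sup id) := by
  have hleft : (X ∪ Y) \ N ⊆ univ \ (insert N K).sup id := by
    intro x hx
    obtain ⟨hxXY, hxN⟩ := mem_sdiff.1 hx
    simp only [sup_insert, id, sup_eq_union, mem_sdiff, mem_univ, mem_union, mem_sup, not_or,
      not_exists, not_and, true_and]
    exact ⟨hxN, fun B hB hxB => disjoint_left.1 (hK B hB) hxXY hxB⟩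
  have hsplit : binSize a ((X ∪ Y) \ N) + binSize a N = binSize a X + binSize a Y := by
    rw [← binSize_union a hXY, ← binSize_union a sdiff_disjoint, sdiff_union_of_subset hN]
  have := binSize_mono a hleft
  omega

lemma exists_improvement {π : Finpartition (univ : Finset (Fin n))}
    (hπ : RationalPartition a b π) {j : Fin n} {Bi E : Finset (Fin n)} (hBi : Bi ∈ π.parts)
    (hjBi : j ∉ Bi) (hN : MinimalCovered a b (insert j (Bi \ E)))
    (hv : ((binSize a (Bi \ E) + a j : ℕ) : ℕ∞) < min (delta a b Bi) (delta a b (π.part j))) :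
    ∃ π', RationalPartition a b π' ∧ welfare a b π ≤ welfare a b π' ∧
      potential a b π < potential a b π' := by
  set Bj := π.part j
  set N := insert j (Bi \ E)
  have hjBj : j ∈ Bj := π.mem_part (mem_univ j)
  have hb : 0 < b := by
    have := hN.2 j (mem_insert_self _ _)
    omega
  have hNsize : binSize a N = binSize a (Bi \ E) + a j := by
    rw [binSize, sum_insert fun h => hjBi (mem_sdiff.1 h).1, add_comm]
    rfl
  have hNi : b ≤ binSize a Bi → binSize a N < binSize a Bi := fun h =>
    hNsize ▸ lt_binSize_of_lt_delta (hv.trans_le (min_le_left _ _)) h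
  have hNj : b ≤ binSize a Bj → binSize a N < binSize a Bj := fun h =>
    hNsize ▸ lt_binSize_of_lt_delta (hv.trans_le (min_le_right _ _)) h
  have hNsub : N ⊆ Bi ∪ Bj :=
    insert_subset (mem_union_right _ hjBj) (sdiff_subset.trans subset_union_left)
  set D := (coveredParts a b π).filter (· ∈ ({Bi, Bj} : Finset _))
  set K := (coveredParts a b π).filter (· ∉ ({Bi, Bj} : Finset _))
  have hKdisj : ∀ B ∈ K, Disjoint (Bi ∪ Bj) B := by
    intro B hB
    simp only [K, coveredParts, mem_filter, mem_insert, mem_singleton, not_or] at hB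
    exact disjoint_union_left.2 ⟨π.disjoint hBi hB.1.1 (Ne.symm hB.2.1),
      π.disjoint (π.part_mem.2 (mem_univ j)) hB.1.1 (Ne.symm hB.2.2)⟩
  have hNK : N ∉ K := fun h =>
    disjoint_left.1 (hKdisj N h) (mem_union_right _ hjBj) (mem_insert_self _ _)
  have hC : MinimalCoveredFamily a b (insert N K) :=
    (hπ.minimalCoveredFamily.subset (filter_subset _ _)).insert_of_disjoint hN
      fun B hB => (hKdisj B hB).mono_left hNsub
  obtain ⟨π', hπ', hsub, hssub⟩ := hC.exists_rationalPartition_superset hb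
  have hD : D ⊆ {Bi, Bj} := fun B hB => (mem_filter.1 hB).2
  have hDcov : ∀ B ∈ D, binSize a N < binSize a B := by
    intro B hB
    obtain ⟨hBcov, hBij⟩ := mem_filter.1 hB
    rcases mem_insert.1 hBij with rfl | hB
    · exact hNi (mem_filter.1 hBcov).2
    · obtain rfl := mem_singleton.1 hB
      exact hNj (mem_filter.1 hBcov).2
  have hD2 : D.card ≤ 2 := (card_le_card hD).trans card_le_two
  refine ⟨π', hπ', ?_, ?_⟩
  · have hsplit : D.card + K.card = welfare a b π := card_filter_add_card_filter_not _
    have hsize : (insert N K).card = K.card + 1 := card_insert_of_notMem hNK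
    rw [← hsplit, welfare_eq_card_coveredParts]
    by_cases hD1 : D.card ≤ 1
    · have := card_le_card hsub
      omega
    · have hDeq : D = {Bi, Bj} := eq_of_subset_of_card_le hD (card_le_two.trans (by omega))
      have hcov : ∀ B ∈ ({Bi, Bj} : Finset _), b ≤ binSize a B := fun B hB =>
        (mem_filter.1 (mem_filter.1 (hDeq ▸ hB : B ∈ D)).1).2
      have hij : Disjoint Bi Bj :=
        π.disjoint hBi (π.part_mem.2 (mem_univ j)) fun h => hjBi (h ▸ hjBj)
      have hrest := lt_binSize_compl_sup_insert hij hNsub hKdisj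
        (hNi (hcov Bi (mem_insert_self _ _)))
      have := card_lt_card (hssub ((hcov Bj (by simp)).trans hrest.le))
      omega
  · have hsplit : ∑ B ∈ D, (3⁻¹ : ℚ) ^ binSize a B + ∑ B ∈ K, (3⁻¹ : ℚ) ^ binSize a B =
        potential a b π := sum_filter_add_sum_filter_not _ _ _
    calc potential a b π
        = ∑ B ∈ D, (3⁻¹ : ℚ) ^ binSize a B + ∑ B ∈ K, (3⁻¹ : ℚ) ^ binSize a B := hsplit.symm
      _ < (3⁻¹ : ℚ) ^ binSize a N + ∑ B ∈ K, (3⁻¹ : ℚ) ^ binSize a B :=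
        add_lt_add_left (sum_inv_three_pow_lt _ hD2 hDcov) _
      _ = ∑ B ∈ insert N K, (3⁻¹ : ℚ) ^ binSize a B := by
        rw [sum_insert hNK]
      _ ≤ potential a b π' := sum_le_sum_of_subset_of_nonneg hsub fun _ _ _ => by positivity

end Improvement

theorem stmt7_general (n : ℕ) (a : Fin n → ℕ) (b : ℕ)
    (π : Finpartition (univ : Finset (Fin n))) (hπ : RationalPartition a b π) :
    ∃ π' : Finpartition (univ : Finset (Fin n)),
      IsFNE3 a b π' ∧ welfare a b π ≤ welfare a b π' := by
  classical
  let S := univ.filter fun π' => RationalPartition a b π' ∧ welfare a b π ≤ welfare a b π'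
  obtain ⟨π', hπ'S, hmax⟩ :=
    S.exists_max_image (potential a b) ⟨π, mem_filter.2 ⟨mem_univ _, hπ, le_rfl⟩⟩
  obtain ⟨-, hπ', hw⟩ := mem_filter.1 hπ'S
  refine ⟨π', ⟨hπ', ?_⟩, hw⟩
  rintro ⟨j, Bi, E, hBi, hjBi, -, hN, hv⟩
  obtain ⟨π'', hπ'', hw'', hlt⟩ := exists_improvement hπ' hBi hjBi hN hv
  exact (hmax π'' (mem_filter.2 ⟨mem_univ _, hπ'', hw.trans hw''⟩)).not_gt hlt

/-- every rational partition can be turned into an FNE(III) without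
decreasing the social welfare. -/
theorem stmt7 (n : ℕ) (hn : 1 ≤ n) (a : Fin n → ℕ) (b : ℕ)
    (ha : ∀ j, 0 < a j) (hab : ∀ j, a j < b)
    (π : Finpartition (univ : Finset (Fin n))) (hπ : RationalPartition a b π) :
    ∃ π' : Finpartition (univ : Finset (Fin n)),
      IsFNE3 a b π' ∧ welfare a b π ≤ welfare a b π' :=
  stmt7_general n a b π hπ
end
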